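/- (Reparametrization invariance of Q.) Let β be a (φ, ℓ)-quasiperiodic family and let φ̃ : ℝ → ℝ be a smooth map with φ̃(t+1) = φ̃(t) + 1 for all t (for instance an orientation-preserving diffeomorphism commuting with the unit translation). Then the family β∘φ̃ : t ↦ β_{φ̃(t)} is again (φ, ℓ)-quasiperiodic, and Q(β∘φ̃)(x, y) = Q(β)(x, y) for all x, y ∈ E. -/

import Mathlib

/-!
Substituting `u = φ̃ t` turns the integral of `Q(β ∘ φ̃)` into the integral of
`F u = (β_u ∧_B β̇_u)(x, y)` over `[a, a + 1]`, `a = φ̃ 0`. Since `φ` preserves `B`, the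
quasiperiodicity gives `F (u + 1) - F u = -(d/du) (ℓ ∧_B β_u)(x, y)`, so sliding the window back
to `[0, 1]` changes the integral by `-((ℓ ∧_B β_a) - (ℓ ∧_B β_0))(x, y)`, which cancels the change
of the boundary term `(ℓ ∧_B β_{φ̃ 0})(x, y)`.
-/

/-- `(a ∧_B b)(x, y) = B(a x, b y) - B(a y, b x)` for maps `a, b : E → 𝔤`. -/
def wedgeB {𝔤 E : Type*} [NormedAddCommGroup 𝔤] [NormedSpace ℝ 𝔤]
    [AddCommGroup E] [Module ℝ E]
    (B : 𝔤 →ₗ[ℝ] 𝔤 →ₗ[ℝ] ℝ) (a b : E → 𝔤) (x y : E) : ℝ :=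
  B (a x) (b y) - B (a y) (b x)

/-- A `(φ, r)`-quasiperiodic family of linear maps `E → 𝔤`: smooth in `t` and
`β (t+1) = φ ∘ β t - r`. -/
def QuasiPeriodic {𝔤 E : Type*} [NormedAddCommGroup 𝔤] [NormedSpace ℝ 𝔤]
    [AddCommGroup E] [Module ℝ E]
    (φ : 𝔤 → 𝔤) (r : E → 𝔤) (β : ℝ → E →ₗ[ℝ] 𝔤) : Prop :=
  (∀ x : E, ContDiff ℝ (⊤ : ℕ∞) (fun t => β t x)) ∧
  ∀ (t : ℝ) (x : E), β (t + 1) x = φ (β t x) - r x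

/-- The functional `Q(β)(x,y) = (1/2)(ℓ ∧_B β_0)(x,y) + (1/2)∫₀¹ (β_t ∧_B β̇_t)(x,y) dt`. -/
noncomputable def Qfun {𝔤 E : Type*} [NormedAddCommGroup 𝔤] [NormedSpace ℝ 𝔤]
    [AddCommGroup E] [Module ℝ E]
    (B : 𝔤 →ₗ[ℝ] 𝔤 →ₗ[ℝ] ℝ) (ℓ : E → 𝔤) (β : ℝ → E → 𝔤) (x y : E) : ℝ :=
  (1/2 : ℝ) * wedgeB B ℓ (β 0) x y
    + (1/2 : ℝ) * ∫ t in (0:ℝ)..1,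
        wedgeB B (β t) (fun e => deriv (fun s => β s e) t) x y


open intervalIntegral

theorem integral_add_period_eq_add_integral_sub {E : Type*} [NormedAddCommGroup E]
    [NormedSpace ℝ E] {F : ℝ → E} (hF : Continuous F) (a T : ℝ) :
    ∫ u in a..a + T, F u = (∫ u in 0..T, F u) + ∫ u in 0..a, (F (u + T) - F u) := by
  have hint : ∀ p q : ℝ, IntervalIntegrable F MeasureTheory.volume p q :=
    hF.intervalIntegrable
  have hshift : IntervalIntegrable (fun u => F (u + T)) MeasureTheory.volume 0 a :=
    (hF.comp (continuous_add_const T)).intervalIntegrable 0 a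
  rw [integral_sub hshift (hint 0 a),
    integral_comp_add_right, zero_add, add_sub, add_comm a T,
    integral_add_adjacent_intervals (hint 0 T) (hint T (T + a)),
    ← integral_add_adjacent_intervals (hint 0 a) (hint a (T + a))]
  abel

section Curves

variable {V : Type*} [NormedAddCommGroup V] [NormedSpace ℝ V]

theorem deriv_add_of_forall_add_eq {h : ℝ → V} (A : V →L[ℝ] V) {T : ℝ} {c : V}
    (hper : ∀ t, h (t + T) = A (h t) - c) {t : ℝ} (ht : DifferentiableAt ℝ h t) :
    deriv h (t + T) = A (deriv h t) := by
  rw [← deriv_comp_add_const, funext hper]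
  exact ((A.hasFDerivAt.comp_hasDerivAt t ht.hasDerivAt).sub_const c).deriv

variable (B : V →L[ℝ] V →L[ℝ] ℝ)

/-- `(β_t ∧_B β̇_t)(x, y)` for the curves `f = (β · x)`, `g = (β · y)`. -/
noncomputable def wedgeDensity (f g : ℝ → V) (t : ℝ) : ℝ :=
  B (f t) (deriv g t) - B (g t) (deriv f t)

/-- `Q(β)(x, y)` for the curves `f = (β · x)`, `g = (β · y)`, with `l = ℓ x`, `m = ℓ y`. -/
noncomputable def curveQ (l m : V) (f g : ℝ → V) : ℝ :=
  (1/2 : ℝ) * (B l (g 0) - B m (f 0)) + (1/2 : ℝ) * ∫ t in (0:ℝ)..1, wedgeDensity B f g t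

variable {B}

theorem continuous_wedgeDensity {f g : ℝ → V} (hf : ContDiff ℝ 1 f) (hg : ContDiff ℝ 1 g) :
    Continuous (wedgeDensity B f g) := by
  rw [contDiff_one_iff_deriv] at hf hg
  exact (B.continuous₂.comp₂ hf.1.continuous hg.2).sub
    (B.continuous₂.comp₂ hg.1.continuous hf.2)

theorem wedgeDensity_comp {f g : ℝ → V} {φ : ℝ → ℝ} {t : ℝ}
    (hf : DifferentiableAt ℝ f (φ t)) (hg : DifferentiableAt ℝ g (φ t))
    (hφ : DifferentiableAt ℝ φ t) :
    wedgeDensity B (fun s => f (φ s)) (fun s => g (φ s)) t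
      = deriv φ t * wedgeDensity B f g (φ t) := by
  have hdf : deriv (fun s => f (φ s)) t = deriv φ t • deriv f (φ t) := deriv.scomp t hf hφ
  have hdg : deriv (fun s => g (φ s)) t = deriv φ t • deriv g (φ t) := deriv.scomp t hg hφ
  simp only [wedgeDensity, hdf, hdg, map_smul, smul_eq_mul]
  ring

theorem wedgeDensity_add_of_forall_add_eq {f g : ℝ → V} {A : V →L[ℝ] V} {T : ℝ} {l m : V}
    (hA : ∀ u v, B (A u) (A v) = B u v)
    (hfper : ∀ t, f (t + T) = A (f t) - A l) (hgper : ∀ t, g (t + T) = A (g t) - A m)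
    {t : ℝ} (hf : DifferentiableAt ℝ f t) (hg : DifferentiableAt ℝ g t) :
    wedgeDensity B f g (t + T) = wedgeDensity B f g t - (B l (deriv g t) - B m (deriv f t)) := by
  simp only [wedgeDensity, hfper, hgper, deriv_add_of_forall_add_eq A hfper hf,
    deriv_add_of_forall_add_eq A hgper hg, ← map_sub, hA]
  simp only [map_sub, sub_apply]
  ring

theorem integral_wedgeDensity_add_period {f g : ℝ → V} {A : V →L[ℝ] V} {T : ℝ} {l m : V}
    (hf : ContDiff ℝ 1 f) (hg : ContDiff ℝ 1 g) (hA : ∀ u v, B (A u) (A v) = B u v)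
    (hfper : ∀ t, f (t + T) = A (f t) - A l) (hgper : ∀ t, g (t + T) = A (g t) - A m)
    (a : ℝ) :
    ∫ u in a..a + T, wedgeDensity B f g u
      = (∫ u in 0..T, wedgeDensity B f g u)
        - ((B l (g a) - B m (f a)) - (B l (g 0) - B m (f 0))) := by
  have hfd : Differentiable ℝ f := hf.differentiable one_ne_zero
  have hgd : Differentiable ℝ g := hg.differentiable one_ne_zero
  have hboundary : ∀ u, HasDerivAt (fun s => B l (g s) - B m (f s))
      (B l (deriv g u) - B m (deriv f u)) u := fun u =>
    ((B l).hasFDerivAt.comp_hasDerivAt u (hgd u).hasDerivAt).sub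
      ((B m).hasFDerivAt.comp_hasDerivAt u (hfd u).hasDerivAt)
  have hboundary_cont : Continuous fun u => B l (deriv g u) - B m (deriv f u) :=
    ((B l).continuous.comp (hg.continuous_deriv le_rfl)).sub
      ((B m).continuous.comp (hf.continuous_deriv le_rfl))
  rw [integral_add_period_eq_add_integral_sub (continuous_wedgeDensity hf hg),
    ← integral_eq_sub_of_hasDerivAt (fun u _ => hboundary u)
      (hboundary_cont.intervalIntegrable 0 a), sub_eq_add_neg, ← integral_neg]
  congr 1
  refine integral_congr fun u _ => ?_
  simp only [wedgeDensity_add_of_forall_add_eq hA hfper hgper (hfd u) (hgd u)]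
  ring

theorem curveQ_comp {f g : ℝ → V} {A : V →L[ℝ] V} {l m : V} {φ : ℝ → ℝ}
    (hf : ContDiff ℝ 1 f) (hg : ContDiff ℝ 1 g) (hA : ∀ u v, B (A u) (A v) = B u v)
    (hfper : ∀ t, f (t + 1) = A (f t) - A l) (hgper : ∀ t, g (t + 1) = A (g t) - A m)
    (hφ : ContDiff ℝ 1 φ) (hφper : ∀ t, φ (t + 1) = φ t + 1) :
    curveQ B l m (fun s => f (φ s)) (fun s => g (φ s)) = curveQ B l m f g := by
  have hfd : Differentiable ℝ f := hf.differentiable one_ne_zero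
  have hgd : Differentiable ℝ g := hg.differentiable one_ne_zero
  have hφd : Differentiable ℝ φ := hφ.differentiable one_ne_zero
  have hsubst : ∫ t in (0:ℝ)..1, wedgeDensity B (fun s => f (φ s)) (fun s => g (φ s)) t
      = ∫ u in φ 0..φ 0 + 1, wedgeDensity B f g u := by
    rw [← hφper 0, zero_add, ← integral_comp_mul_deriv (fun t _ => (hφd t).hasDerivAt)
      (hφ.continuous_deriv le_rfl).continuousOn (continuous_wedgeDensity hf hg)]
    refine integral_congr fun t _ => ?_
    simp only [wedgeDensity_comp (hfd _) (hgd _) (hφd t), Function.comp, mul_comm]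
  simp only [curveQ, hsubst, integral_wedgeDensity_add_period hf hg hA hfper hgper]
  ring

end Curves

theorem Q_reparametrization_invariance_general
    {𝔤 E : Type*} [NormedAddCommGroup 𝔤] [NormedSpace ℝ 𝔤] [FiniteDimensional ℝ 𝔤]
    [AddCommGroup E] [Module ℝ E]
    (B : 𝔤 →ₗ[ℝ] 𝔤 →ₗ[ℝ] ℝ)
    (φ : 𝔤 ≃ₗ[ℝ] 𝔤)
    (hφB : ∀ x y : 𝔤, B (φ x) (φ y) = B x y)
    (ℓ : E →ₗ[ℝ] 𝔤)
    (β : ℝ → E →ₗ[ℝ] 𝔤)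
    (hβ : QuasiPeriodic ⇑φ (fun x => φ (ℓ x)) β)
    (φt : ℝ → ℝ) (hφt_smooth : ContDiff ℝ (⊤ : ℕ∞) φt)
    (hφt_per : ∀ t : ℝ, φt (t + 1) = φt t + 1) :
    QuasiPeriodic ⇑φ (fun x => φ (ℓ x)) (fun t => β (φt t)) ∧
    ∀ x y : E,
      Qfun B ⇑ℓ (fun t => ⇑(β (φt t))) x y = Qfun B ⇑ℓ (fun t => ⇑(β t)) x y := by
  obtain ⟨hsmooth, hper⟩ := hβ
  refine ⟨⟨fun x => (hsmooth x).comp hφt_smooth, fun t x => by simp only [hφt_per, hper]⟩,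
    fun x y => ?_⟩
  have hC1 : ∀ x, ContDiff ℝ 1 fun t => β t x := fun x => (hsmooth x).of_le (by simp)
  exact curveQ_comp (B := B.toContinuousBilinearMap) (A := LinearMap.toContinuousLinearMap φ)
    (hC1 x) (hC1 y) hφB (fun t => hper t x) (fun t => hper t y)
    (hφt_smooth.of_le (by simp)) hφt_per

/-- reparametrization invariance of `Q`: for a `(φ, ℓ)`-quasiperiodic
family `β` and smooth `φ̃ : ℝ → ℝ` with `φ̃(t+1) = φ̃(t) + 1`, the family
`t ↦ β (φ̃ t)` is again `(φ, ℓ)`-quasiperiodic and `Q(β∘φ̃) = Q(β)`. -/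
theorem Q_reparametrization_invariance
    {𝔤 E : Type*} [NormedAddCommGroup 𝔤] [NormedSpace ℝ 𝔤] [FiniteDimensional ℝ 𝔤]
    [AddCommGroup E] [Module ℝ E]
    (br : 𝔤 →ₗ[ℝ] 𝔤 →ₗ[ℝ] 𝔤)
    (br_alt : ∀ x : 𝔤, br x x = 0)
    (br_jacobi : ∀ x y z : 𝔤, br (br x y) z + br (br y z) x + br (br z x) y = 0)
    (B : 𝔤 →ₗ[ℝ] 𝔤 →ₗ[ℝ] ℝ)
    (B_symm : ∀ x y : 𝔤, B x y = B y x)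
    (B_inv : ∀ x y z : 𝔤, B (br x y) z = B x (br y z))
    (φ : 𝔤 ≃ₗ[ℝ] 𝔤)
    (hφbr : ∀ x y : 𝔤, φ (br x y) = br (φ x) (φ y))
    (hφB : ∀ x y : 𝔤, B (φ x) (φ y) = B x y)
    (ℓ : E →ₗ[ℝ] 𝔤)
    (β : ℝ → E →ₗ[ℝ] 𝔤)
    (hβ : QuasiPeriodic ⇑φ (fun x => φ (ℓ x)) β)
    (φt : ℝ → ℝ) (hφt_smooth : ContDiff ℝ (⊤ : ℕ∞) φt)
    (hφt_per : ∀ t : ℝ, φt (t + 1) = φt t + 1) :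
    QuasiPeriodic ⇑φ (fun x => φ (ℓ x)) (fun t => β (φt t)) ∧
    ∀ x y : E,
      Qfun B ⇑ℓ (fun t => ⇑(β (φt t))) x y = Qfun B ⇑ℓ (fun t => ⇑(β t)) x y :=
  Q_reparametrization_invariance_general B φ hφB ℓ β hβ φt hφt_smooth hφt_per
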